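/- Fix real numbers ν ≥ 0, ε > 0, μ ≥ 0, ω > 0 and u ∈ [-1,1]. The function f(α) = (ν/4)((α²-ω²)₊)² + (ε/2)α² + (μ/2)(ωu - α)² has a unique global minimizer on ℝ, given by α* = μωu/(μ+ε). In particular |α*| < ω and (α*² - ω²)₊ = 0. -/
import Mathlib


/-- The pointwise curvature potential
`f(α) = (ν/4)((α²-ω²)₊)² + (ε/2)α² + (μ/2)(ωu - α)²`
has the unique global minimizer `α* = μωu/(μ+ε)`, which satisfies `|α*| < ω`
and `(α*² - ω²)₊ = 0`. -/
theorem unique_minimizer_curvature_potential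
    (ν ε μ ω u : ℝ) (hν : 0 ≤ ν) (hε : 0 < ε) (hμ : 0 ≤ μ) (hω : 0 < ω)
    (hu : u ∈ Set.Icc (-1:ℝ) 1) :
    let f : ℝ → ℝ := fun α =>
      ν / 4 * (max (α ^ 2 - ω ^ 2) 0) ^ 2 + ε / 2 * α ^ 2 + μ / 2 * (ω * u - α) ^ 2
    let αstar : ℝ := μ * ω * u / (μ + ε)
    (∀ α : ℝ, α ≠ αstar → f αstar < f α) ∧
    |αstar| < ω ∧ max (αstar ^ 2 - ω ^ 2) 0 = 0 := by
  intro f αstar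
  obtain ⟨hu1, hu2⟩ := hu
  have hμε : 0 < μ + ε := by linarith
  have habs : |αstar| < ω := by
    have h1 : |μ * ω * u| ≤ μ * ω := by
      rw [abs_mul, abs_of_nonneg (by positivity : (0:ℝ) ≤ μ * ω)]
      have : |u| ≤ 1 := abs_le.mpr ⟨hu1, hu2⟩
      exact mul_le_of_le_one_right (by positivity) this
    have h2 : μ * ω < ω * (μ + ε) := by nlinarith
    show |μ * ω * u / (μ + ε)| < ω
    rw [abs_div, abs_of_pos hμε, div_lt_iff₀ hμε]
    linarith
  have hsq : αstar ^ 2 < ω ^ 2 := by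
    have := abs_lt.mp habs
    nlinarith [this.1, this.2]
  have hmax : max (αstar ^ 2 - ω ^ 2) 0 = 0 := max_eq_right (by linarith)
  refine ⟨?_, habs, hmax⟩
  intro α hα
  have hαs : (μ + ε) * αstar = μ * ω * u := by
    show (μ + ε) * (μ * ω * u / (μ + ε)) = μ * ω * u
    field_simp
  have hne : α - αstar ≠ 0 := sub_ne_zero.mpr hα
  have hpos : 0 < (α - αstar) ^ 2 := by positivity
  have key : ε / 2 * α ^ 2 + μ / 2 * (ω * u - α) ^ 2
      - (ε / 2 * αstar ^ 2 + μ / 2 * (ω * u - αstar) ^ 2)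
      = (μ + ε) / 2 * (α - αstar) ^ 2 := by
    linear_combination (α - αstar) * hαs
  have hg : ε / 2 * αstar ^ 2 + μ / 2 * (ω * u - αstar) ^ 2
      < ε / 2 * α ^ 2 + μ / 2 * (ω * u - α) ^ 2 := by
    nlinarith [mul_pos hμε hpos]
  have hnn : 0 ≤ ν / 4 * (max (α ^ 2 - ω ^ 2) 0) ^ 2 := by positivity
  show ν / 4 * (max (αstar ^ 2 - ω ^ 2) 0) ^ 2 + ε / 2 * αstar ^ 2
      + μ / 2 * (ω * u - αstar) ^ 2
      < ν / 4 * (max (α ^ 2 - ω ^ 2) 0) ^ 2 + ε / 2 * α ^ 2 + μ / 2 * (ω * u - α) ^ 2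
  rw [hmax]
  simpa using by linarith
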